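/- arXiv:2002.10424 — 2 statements merged into one kernel-verified Lean document; each statement's English description precedes it below -/
import Mathlib

section
/- Let J ⊆ S = k[x,y,z] be a saturated homogeneous ideal such that S/J has Hilbert function (1,2,3,3,3,…), i.e., dim_k(S/J)_0 = 1, dim_k(S/J)_1 = 2, and dim_k(S/J)_d = 3 for all d ≥ 2. Then there exist a linear form ℓ ∈ S₁ and a cubic c ∈ S₃ with c ∉ (ℓ) such that J = (ℓ, c); in particular J is a complete intersection of degrees 1 and 3. -/
/-!
Context: `k` is an algebraically closed field with `char k ≠ 2` and
`S = k[x₁,…,xₙ]` is the standard graded polynomial ring (`MvPolynomial (Fin n) k`);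
`S_d` is the space of homogeneous polynomials of degree `d`.
-/

noncomputable section

variable {k : Type} [Field k]

/-- The degree-`d` graded component `J_d = J ∩ S_d` of an ideal of `S`,
as a `k`-subspace of `S`. -/
def pIdealGrade {n : ℕ} (J : Ideal (MvPolynomial (Fin n) k)) (d : ℕ) :
    Submodule k (MvPolynomial (Fin n) k) :=
  Submodule.restrictScalars k J ⊓ MvPolynomial.homogeneousSubmodule (Fin n) k d

/-- The Hilbert function of `S/J`: `d ↦ dim_k S_d − dim_k J_d`. -/
def hilb {n : ℕ} (J : Ideal (MvPolynomial (Fin n) k)) (d : ℕ) : ℕ :=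
  Module.finrank k (MvPolynomial.homogeneousSubmodule (Fin n) k d) -
    Module.finrank k (pIdealGrade J d)

/-- The irrelevant maximal ideal `m = (x₁,…,xₙ)`. -/
def irrIdeal (k : Type) [Field k] (n : ℕ) : Ideal (MvPolynomial (Fin n) k) :=
  Ideal.span (Set.range MvPolynomial.X)

/-- `J` is saturated: `(J : m) = J`. -/
def IsSatIdeal {n : ℕ} (J : Ideal (MvPolynomial (Fin n) k)) : Prop :=
  Submodule.colon (J : Submodule (MvPolynomial (Fin n) k) (MvPolynomial (Fin n) k))
    (irrIdeal k n) = J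

/-- `sat(J) = K`: an `f ∈ S` satisfies `f·mᵐ ⊆ J` for some `m ≥ 0` iff `f ∈ K`. -/
def SatEq {n : ℕ} (J K : Ideal (MvPolynomial (Fin n) k)) : Prop :=
  ∀ f : MvPolynomial (Fin n) k, (∃ m : ℕ, ∀ g ∈ irrIdeal k n ^ m, f * g ∈ J) ↔ f ∈ K

/-- `J` is a homogeneous ideal: it is the (direct) sum of its graded components. -/
def IsHomogPolyIdeal {n : ℕ} (J : Ideal (MvPolynomial (Fin n) k)) : Prop :=
  ∀ x ∈ J, x ∈ ⨆ d : ℕ, pIdealGrade J d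

end

/-! ### Auxiliary lemmas -/

noncomputable section Aux

open MvPolynomial Module

variable {k : Type} [Field k]

lemma aux_deg_card {α : Type*} (f : α →₀ ℕ) : f.degree = Multiset.card f.toMultiset := by
  rw [Finsupp.card_toMultiset]; rfl

/-- Degree-`d` exponent vectors on `Fin n` correspond to multisets of size `d`. -/
def auxExpEquiv (n d : ℕ) : {s : Fin n →₀ ℕ // s.degree = d} ≃ Sym (Fin n) d where
  toFun s := ⟨Finsupp.toMultiset s.1, by rw [← aux_deg_card]; exact s.2⟩
  invFun m := ⟨Multiset.toFinsupp m.1, by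
    rw [aux_deg_card, Multiset.toFinsupp_toMultiset]; exact m.2⟩
  left_inv s := by ext1; simp
  right_inv m := by ext1; simp

lemma aux_finrank_hs (n d : ℕ) :
    Module.finrank k (homogeneousSubmodule (Fin n) k d) = Nat.multichoose n d := by
  rw [homogeneousSubmodule_eq_finsupp_supported]
  have inst : Fintype {s : Fin n →₀ ℕ // s.degree = d} :=
    Fintype.ofEquiv _ (auxExpEquiv n d).symm
  have inst2 : Fintype {s : Fin n →₀ ℕ | s.degree = d} := inst
  have e1 : (AddMonoidAlgebra.supported k k {s : Fin n →₀ ℕ | s.degree = d}) ≃ₗ[k]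
      ({s : Fin n →₀ ℕ | s.degree = d} →₀ k) := AddMonoidAlgebra.supportedEquivFinsupp _
  refine e1.finrank_eq.trans ?_
  rw [Module.finrank_finsupp_self]
  exact (@Fintype.card_congr' _ _ inst2 inst rfl).trans <|
    (Fintype.card_congr (auxExpEquiv n d)).trans
    (by rw [Sym.card_sym_eq_multichoose, Fintype.card_fin])

instance aux_fd_hs (n d : ℕ) : FiniteDimensional k (homogeneousSubmodule (Fin n) k d) := by
  rw [homogeneousSubmodule_eq_finsupp_supported]
  have inst : Fintype {s : Fin n →₀ ℕ // s.degree = d} :=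
    Fintype.ofEquiv _ (auxExpEquiv n d).symm
  have inst2 : Fintype {s : Fin n →₀ ℕ | s.degree = d} := inst
  have e1 : (AddMonoidAlgebra.supported k k {s : Fin n →₀ ℕ | s.degree = d}) ≃ₗ[k]
      ({s : Fin n →₀ ℕ | s.degree = d} →₀ k) := AddMonoidAlgebra.supportedEquivFinsupp _
  exact e1.symm.finiteDimensional

lemma aux_finrank_hs3 (d : ℕ) :
    Module.finrank k (homogeneousSubmodule (Fin 3) k d) = (d + 2).choose 2 := by
  rw [aux_finrank_hs, Nat.multichoose_eq]
  have h1 : 3 + d - 1 = d + 2 := by omega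
  rw [h1, ← Nat.choose_symm (by omega : d ≤ d + 2)]
  congr 1; omega

/-- Multiplying a homogeneous component decomposition by a homogeneous polynomial. -/
lemma aux_hc_mul {n : ℕ} (l x : MvPolynomial (Fin n) k) {a : ℕ} (hl : l.IsHomogeneous a)
    (e : ℕ) : homogeneousComponent (a + e) (l * x) = l * homogeneousComponent e x := by
  conv_lhs => rw [← sum_homogeneousComponent x]
  rw [Finset.mul_sum, map_sum]
  have key : ∀ j : ℕ, homogeneousComponent (a + e) (l * homogeneousComponent j x)
      = if j = e then l * homogeneousComponent j x else 0 := by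
    intro j
    have hmem : l * homogeneousComponent j x ∈ homogeneousSubmodule (Fin n) k (a + j) :=
      hl.mul (homogeneousComponent_isHomogeneous j x)
    rw [homogeneousComponent_of_mem hmem]
    by_cases hj : j = e
    · simp [hj]
    · rw [if_neg (by omega), if_neg hj]
  simp_rw [key]
  rw [Finset.sum_ite_eq' (Finset.range (x.totalDegree + 1)) e
    (fun j => l * homogeneousComponent j x)]
  by_cases he : e ∈ Finset.range (x.totalDegree + 1)
  · rw [if_pos he]
  · rw [if_neg he]
    have : homogeneousComponent e x = 0 :=
      homogeneousComponent_eq_zero e x (by simpa using he)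
    rw [this, mul_zero]

/-- The top homogeneous component of a nonzero polynomial is nonzero. -/
lemma aux_top_ne_zero {n : ℕ} (x : MvPolynomial (Fin n) k) (hx : x ≠ 0) :
    homogeneousComponent x.totalDegree x ≠ 0 := by
  obtain ⟨m, hm, hdeg⟩ : ∃ m ∈ x.support, (m.sum fun _ e => e) = x.totalDegree := by
    have hne : x.support.Nonempty := by
      rwa [MvPolynomial.support_nonempty]
    obtain ⟨m, hm, h⟩ := Finset.exists_mem_eq_sup x.support hne fun m => m.sum fun _ e => e
    exact ⟨m, hm, h.symm⟩
  intro h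
  have := coeff_homogeneousComponent (σ := Fin n) (R := k) (n := x.totalDegree) (φ := x) m
  rw [h] at this
  simp only [coeff_zero] at this
  rw [if_pos] at this
  · exact (mem_support_iff.mp hm) this.symm
  · simpa [Finsupp.degree_apply, Finsupp.sum] using hdeg

/-- Total degree is additive on products of nonzero polynomials (domain case). -/
lemma aux_totalDegree_mul {n : ℕ} {x y : MvPolynomial (Fin n) k} (hx : x ≠ 0) (hy : y ≠ 0) :
    (x * y).totalDegree = x.totalDegree + y.totalDegree := by
  refine le_antisymm (totalDegree_mul x y) ?_
  set a := x.totalDegree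
  set b := y.totalDegree
  have htop : homogeneousComponent (a + b) (x * y)
      = homogeneousComponent a x * homogeneousComponent b y := by
    conv_lhs => rw [← sum_homogeneousComponent x, Finset.sum_mul, map_sum]
    have key : ∀ i ∈ Finset.range (a + 1),
        homogeneousComponent (a + b) (homogeneousComponent i x * y)
        = if i = a then homogeneousComponent a x * homogeneousComponent b y else 0 := by
      intro i hi
      rw [Finset.mem_range] at hi
      have : a + b = i + (a + b - i) := by omega
      rw [this, aux_hc_mul _ y (homogeneousComponent_isHomogeneous i x)]
      by_cases hia : i = a
      · subst hia
        rw [if_pos rfl, Nat.add_sub_cancel_left]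
      · rw [if_neg hia]
        have hgt : y.totalDegree < a + b - i := by omega
        rw [homogeneousComponent_eq_zero _ y hgt, mul_zero]
    rw [Finset.sum_congr rfl key, Finset.sum_ite_eq' (Finset.range (a + 1)) a]
    rw [if_pos (by simp)]
  by_contra hlt
  push_neg at hlt
  have hz : homogeneousComponent (a + b) (x * y) = 0 :=
    homogeneousComponent_eq_zero _ _ hlt
  rw [htop] at hz
  rcases mul_eq_zero.mp hz with h | h
  · exact aux_top_ne_zero x hx h
  · exact aux_top_ne_zero y hy h

lemma aux_eq_C_of_td0 {n : ℕ} {x : MvPolynomial (Fin n) k} (h : x.totalDegree = 0) :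
    x = C (coeff 0 x) := by
  ext m
  rw [coeff_C]
  by_cases hm : 0 = m
  · rw [if_pos hm, ← hm]
  · rw [if_neg hm]
    by_contra hc
    have hmem : m ∈ x.support := mem_support_iff.mpr hc
    have := (totalDegree_eq_zero_iff _ x).mp h m hmem
    exact hm (by ext i; exact (this i).symm)

/-- A nonzero linear form in a polynomial ring over a field is prime. -/
lemma aux_prime_linear {n : ℕ} {l : MvPolynomial (Fin n) k} (hl : l.IsHomogeneous 1)
    (h0 : l ≠ 0) : Prime l := by
  have htd : l.totalDegree = 1 := hl.totalDegree h0
  rw [← UniqueFactorizationMonoid.irreducible_iff_prime]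
  constructor
  · intro hu
    obtain ⟨u, hu⟩ := hu
    have h1 : l * ((u⁻¹ : Units (MvPolynomial (Fin n) k)) : MvPolynomial (Fin n) k) = 1 := by
      rw [← hu]; exact u.mul_inv
    have hub : ((u⁻¹ : Units (MvPolynomial (Fin n) k)) : MvPolynomial (Fin n) k) ≠ 0 := by
      intro hz
      rw [hz, mul_zero] at h1
      exact zero_ne_one h1
    have h2 := congrArg totalDegree h1
    rw [aux_totalDegree_mul h0 hub, htd, totalDegree_one] at h2
    omega
  · intro a b hab
    have ha : a ≠ 0 := by rintro rfl; rw [zero_mul] at hab; exact h0 hab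
    have hb : b ≠ 0 := by rintro rfl; rw [mul_zero] at hab; exact h0 hab
    have : a.totalDegree + b.totalDegree = 1 := by
      rw [← aux_totalDegree_mul ha hb, ← hab, htd]
    rcases Nat.eq_zero_or_pos a.totalDegree with h | h
    · left
      rw [aux_eq_C_of_td0 h]
      exact (Ne.isUnit (a := coeff 0 a) (by
        intro hz
        apply ha
        rw [aux_eq_C_of_td0 h, hz, map_zero])).map C
    · right
      have hb0 : b.totalDegree = 0 := by omega
      rw [aux_eq_C_of_td0 hb0]
      exact (Ne.isUnit (a := coeff 0 b) (by
        intro hz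
        apply hb
        rw [aux_eq_C_of_td0 hb0, hz, map_zero])).map C

instance aux_fd_grade {n : ℕ} (J : Ideal (MvPolynomial (Fin n) k)) (d : ℕ) :
    FiniteDimensional k (pIdealGrade J d) :=
  Submodule.finiteDimensional_of_le inf_le_right

/-- Homogeneous components of elements of a homogeneous ideal lie in the ideal. -/
lemma aux_comp_mem {n : ℕ} {J : Ideal (MvPolynomial (Fin n) k)} (hhom : IsHomogPolyIdeal J)
    {x : MvPolynomial (Fin n) k} (hx : x ∈ J) (d : ℕ) : homogeneousComponent d x ∈ J := by
  have hsup := hhom x hx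
  refine Submodule.iSup_induction (motive := fun y => ∀ e : ℕ, homogeneousComponent e y ∈ J)
    (pIdealGrade J) hsup ?_ ?_ ?_ d
  · intro i y hy e
    obtain ⟨hyJ, hyS⟩ := hy
    rw [homogeneousComponent_of_mem hyS]
    by_cases he : e = i
    · rwa [if_pos he]
    · rw [if_neg he]; exact Ideal.zero_mem J
  · intro e; rw [map_zero]; exact Ideal.zero_mem J
  · intro y z hy hz e
    rw [map_add]
    exact Ideal.add_mem J (hy e) (hz e)

end Aux

open MvPolynomial in
/-- A saturated homogeneous ideal `J ⊆ S = k[x,y,z]` with `S/J` of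
Hilbert function `(1,2,3,3,3,…)` is of the form `J = (ℓ, c)` with `ℓ` a linear form
and `c` a cubic not divisible by `ℓ` (a complete intersection of degrees 1 and 3). -/
theorem stmt_13 (k : Type) [Field k] [IsAlgClosed k] (hchar : ringChar k ≠ 2)
    (J : Ideal (MvPolynomial (Fin 3) k))
    (hhom : IsHomogPolyIdeal J) (hsat : IsSatIdeal J)
    (h0 : hilb J 0 = 1) (h1 : hilb J 1 = 2) (hd : ∀ d : ℕ, 2 ≤ d → hilb J d = 3) :
    ∃ l ∈ homogeneousSubmodule (Fin 3) k 1, ∃ c ∈ homogeneousSubmodule (Fin 3) k 3,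
      c ∉ Ideal.span {l} ∧ J = Ideal.span {l, c} := by
  classical
  -- Notation
  set hs : ℕ → Submodule k (MvPolynomial (Fin 3) k) :=
    fun d => homogeneousSubmodule (Fin 3) k d with hs_def
  have hSd : ∀ d : ℕ, Module.finrank k (hs d) = (d + 2).choose 2 := aux_finrank_hs3
  have hJle : ∀ d : ℕ, pIdealGrade J d ≤ hs d := fun d => inf_le_right
  -- dimensions of graded pieces of J
  have hJrank : ∀ d : ℕ, 2 ≤ d →
      Module.finrank k (pIdealGrade J d) = (d + 2).choose 2 - 3 ∧
      3 ≤ (d + 2).choose 2 := by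
    intro d hd2
    have h := hd d hd2
    rw [hilb] at h
    have hle : Module.finrank k (pIdealGrade J d) ≤ Module.finrank k (hs d) :=
      Submodule.finrank_mono (hJle d)
    rw [hSd d] at h hle
    omega
  -- degree-1 piece: find the linear form l
  have hr1 : Module.finrank k (pIdealGrade J 1) = 1 := by
    have h := h1
    rw [hilb] at h
    have hle : Module.finrank k (pIdealGrade J 1) ≤ Module.finrank k (hs 1) :=
      Submodule.finrank_mono (hJle 1)
    rw [hSd 1] at h hle
    norm_num at h hle
    omega
  have hbne : pIdealGrade J 1 ≠ ⊥ := by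
    intro hb
    rw [hb, finrank_bot] at hr1
    omega
  obtain ⟨l, hlmem, hlne⟩ := Submodule.exists_mem_ne_zero_of_ne_bot hbne
  have hl1 : l ∈ homogeneousSubmodule (Fin 3) k 1 := (hJle 1) hlmem
  have hlJ : l ∈ J := hlmem.1
  have hlhom : l.IsHomogeneous 1 := (mem_homogeneousSubmodule 1 l).mp hl1
  have hspan : Submodule.span k {l} = pIdealGrade J 1 := by
    refine Submodule.eq_of_le_of_finrank_le ?_ ?_
    · rw [Submodule.span_le, Set.singleton_subset_iff]; exact hlmem
    · rw [hr1, finrank_span_singleton hlne]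
  -- multiplication maps
  have hinj : Function.Injective (LinearMap.mulLeft k l) := by
    intro a b hab
    simp only [LinearMap.mulLeft_apply] at hab
    exact mul_left_cancel₀ hlne hab
  set A : ℕ → Submodule k (MvPolynomial (Fin 3) k) :=
    fun e => Submodule.map (LinearMap.mulLeft k l) (hs e) with A_def
  have hA_rank : ∀ e : ℕ, Module.finrank k (A e) = (e + 2).choose 2 := by
    intro e
    rw [← hSd e]
    exact (LinearEquiv.finrank_eq
      (Submodule.equivMapOfInjective (LinearMap.mulLeft k l) hinj (hs e))).symm
  have hA_le_S : ∀ e : ℕ, A e ≤ hs (1 + e) := by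
    rintro e x ⟨w, hw, rfl⟩
    simp only [LinearMap.mulLeft_apply]
    exact hlhom.mul ((mem_homogeneousSubmodule e w).mp hw)
  have hA_le_J : ∀ e : ℕ, A e ≤ pIdealGrade J (1 + e) := by
    rintro e x ⟨w, hw, rfl⟩
    refine ⟨?_, hA_le_S e ⟨w, hw, rfl⟩⟩
    simp only [LinearMap.mulLeft_apply, Submodule.restrictScalars_mem]
    exact Ideal.mul_mem_right w J hlJ
  haveI hAfd : ∀ e : ℕ, FiniteDimensional k (A e) :=
    fun e => Submodule.finiteDimensional_of_le (hA_le_S e)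
  -- degree 2
  have h2 : pIdealGrade J 2 = A 1 := by
    refine (Submodule.eq_of_le_of_finrank_le ?_ ?_).symm
    · have := hA_le_J 1; norm_num at this; exact this
    · rw [hA_rank 1, (hJrank 2 le_rfl).1]; decide
  -- degree 3 : find the cubic c
  have hr3 : Module.finrank k (pIdealGrade J 3) = 7 := by
    have := (hJrank 3 (by norm_num)).1
    norm_num [Nat.choose] at this
    exact this
  have hA2J : A 2 ≤ pIdealGrade J 3 := by
    have := hA_le_J 2; norm_num at this; exact this
  have hnotle : ¬ pIdealGrade J 3 ≤ A 2 := by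
    intro hle
    have := Submodule.finrank_mono hle
    rw [hr3, hA_rank 2] at this
    norm_num [Nat.choose] at this
  obtain ⟨c, hcmem, hcA⟩ := SetLike.not_le_iff_exists.mp hnotle
  have hc3 : c ∈ homogeneousSubmodule (Fin 3) k 3 := (hJle 3) hcmem
  have hcJ : c ∈ J := hcmem.1
  have hchom : c.IsHomogeneous 3 := (mem_homogeneousSubmodule 3 c).mp hc3
  have hcne : c ≠ 0 := by rintro rfl; exact hcA (Submodule.zero_mem _)
  -- c is not a multiple of l
  have hcnotl : c ∉ Ideal.span {l} := by
    intro hmem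
    obtain ⟨g, hg⟩ := Ideal.mem_span_singleton'.mp hmem
    apply hcA
    have hcc : c = l * homogeneousComponent 2 g := by
      have h1 : homogeneousComponent 3 c = c := by
        rw [homogeneousComponent_of_mem hc3, if_pos rfl]
      have h2 : homogeneousComponent 3 (l * g) = l * homogeneousComponent 2 g := by
        have := aux_hc_mul l g hlhom 2
        norm_num at this
        exact this
      rw [← h1, ← hg]
      rw [show g * l = l * g from mul_comm g l, h2]
    exact ⟨homogeneousComponent 2 g, homogeneousComponent_mem 2 g, by
      simp only [LinearMap.mulLeft_apply]; exact hcc.symm⟩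
  have hlprime : Prime l := aux_prime_linear hlhom hlne
  have hlndvdc : ¬ l ∣ c := fun hdvd => hcnotl (Ideal.mem_span_singleton.mpr hdvd)
  -- the candidate ideal
  set K : Ideal (MvPolynomial (Fin 3) k) := Ideal.span {l, c} with K_def
  have hlK : l ∈ K := Ideal.subset_span (by simp)
  have hcK : c ∈ K := Ideal.subset_span (by simp)
  have hKJ : K ≤ J := by
    rw [K_def, Ideal.span_le]
    rintro x hx
    simp only [Set.mem_insert_iff, Set.mem_singleton_iff] at hx
    rcases hx with rfl | rfl
    · exact hlJ
    · exact hcJ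
  have hAK : ∀ e : ℕ, A e ≤ Submodule.restrictScalars k K := by
    rintro e x ⟨w, hw, rfl⟩
    simp only [LinearMap.mulLeft_apply, Submodule.restrictScalars_mem]
    exact Ideal.mul_mem_right w K hlK
  -- second multiplication map
  set B : ℕ → Submodule k (MvPolynomial (Fin 3) k) :=
    fun e => Submodule.map (LinearMap.mulLeft k c) (hs e) with B_def
  have hcinj : Function.Injective (LinearMap.mulLeft k c) := by
    intro a b hab
    simp only [LinearMap.mulLeft_apply] at hab
    exact mul_left_cancel₀ hcne hab
  have hB_rank : ∀ e : ℕ, Module.finrank k (B e) = (e + 2).choose 2 := by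
    intro e
    rw [← hSd e]
    exact (LinearEquiv.finrank_eq
      (Submodule.equivMapOfInjective (LinearMap.mulLeft k c) hcinj (hs e))).symm
  have hB_le_S : ∀ e : ℕ, B e ≤ hs (3 + e) := by
    rintro e x ⟨w, hw, rfl⟩
    simp only [LinearMap.mulLeft_apply]
    exact hchom.mul ((mem_homogeneousSubmodule e w).mp hw)
  have hB_le_J : ∀ e : ℕ, B e ≤ pIdealGrade J (3 + e) := by
    rintro e x ⟨w, hw, rfl⟩
    refine ⟨?_, hB_le_S e ⟨w, hw, rfl⟩⟩
    simp only [LinearMap.mulLeft_apply, Submodule.restrictScalars_mem]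
    exact Ideal.mul_mem_right w J hcJ
  have hBK : ∀ e : ℕ, B e ≤ Submodule.restrictScalars k K := by
    rintro e x ⟨w, hw, rfl⟩
    simp only [LinearMap.mulLeft_apply, Submodule.restrictScalars_mem]
    exact Ideal.mul_mem_right w K hcK
  haveI hBfd : ∀ e : ℕ, FiniteDimensional k (B e) :=
    fun e => Submodule.finiteDimensional_of_le (hB_le_S e)
  -- each graded piece of J lies in K
  have key : ∀ d : ℕ, pIdealGrade J d ≤ Submodule.restrictScalars k K := by
    intro d
    have c1 : ∀ m : ℕ, (m + 3).choose 2 = (m + 2).choose 2 + (m + 2) := by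
      intro m
      rw [show m + 3 = (m + 2) + 1 from rfl, Nat.choose_succ_succ,
        Nat.choose_one_right, Nat.add_comm]
    rcases d with _ | (_ | (_ | (_ | e)))
    · -- degree 0
      have h := h0
      rw [hilb] at h
      have hle : Module.finrank k (pIdealGrade J 0) ≤ Module.finrank k (hs 0) :=
        Submodule.finrank_mono (hJle 0)
      rw [hSd 0] at h hle
      norm_num at h hle
      have : Module.finrank k (pIdealGrade J 0) = 0 := by omega
      rw [Submodule.finrank_eq_zero] at this
      rw [this]
      exact bot_le
    · -- degree 1
      rw [← hspan, Submodule.span_le, Set.singleton_subset_iff]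
      exact hlK
    · -- degree 2
      rw [h2]
      exact hAK 1
    · -- degree 3
      have hsub : A 2 ⊔ Submodule.span k {c} ≤ pIdealGrade J 3 := by
        refine sup_le hA2J ?_
        rw [Submodule.span_le, Set.singleton_subset_iff]
        exact hcmem
      haveI : FiniteDimensional k (A 2 ⊔ Submodule.span k {c} :
          Submodule k (MvPolynomial (Fin 3) k)) :=
        Submodule.finiteDimensional_of_le hsub
      have hrk : 7 ≤ Module.finrank k (A 2 ⊔ Submodule.span k {c} :
          Submodule k (MvPolynomial (Fin 3) k)) := by
        by_contra hlt
        push_neg at hlt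
        have hAle : A 2 ≤ A 2 ⊔ Submodule.span k {c} := le_sup_left
        have heq : A 2 = A 2 ⊔ Submodule.span k {c} := by
          refine Submodule.eq_of_le_of_finrank_le hAle ?_
          rw [hA_rank 2]
          norm_num [Nat.choose]
          omega
        apply hcA
        rw [heq]
        exact Submodule.mem_sup_right (Submodule.mem_span_singleton_self c)
      have heq3 : A 2 ⊔ Submodule.span k {c} = pIdealGrade J 3 :=
        Submodule.eq_of_le_of_finrank_le hsub (by rw [hr3]; exact hrk)
      rw [← heq3]
      refine sup_le (hAK 2) ?_
      rw [Submodule.span_le, Set.singleton_subset_iff]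
      exact hcK
    · -- degree e + 4
      show pIdealGrade J (e + 4) ≤ Submodule.restrictScalars k K
      -- the span in degree e+4
      have hWle : A (e + 3) ⊔ B (e + 1) ≤ pIdealGrade J (e + 4) := by
        refine sup_le ?_ ?_
        · have := hA_le_J (e + 3)
          rw [show 1 + (e + 3) = e + 4 from by omega] at this
          exact this
        · have := hB_le_J (e + 1)
          rw [show 3 + (e + 1) = e + 4 from by omega] at this
          exact this
      -- bound the intersection
      have hInf : A (e + 3) ⊓ B (e + 1) ≤
          Submodule.map (LinearMap.mulLeft k (l * c)) (hs e) := by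
        rintro x ⟨hxA, hxB⟩
        obtain ⟨f, hf, hfe⟩ := hxA
        obtain ⟨g, hg, hge⟩ := hxB
        simp only [LinearMap.mulLeft_apply] at hfe hge
        have hdvd : l ∣ g := by
          refine (hlprime.dvd_or_dvd ⟨f, ?_⟩).resolve_left hlndvdc
          rw [hge, ← hfe]
        obtain ⟨h', hh'⟩ := hdvd
        have hghom : g.IsHomogeneous (e + 1) := (mem_homogeneousSubmodule _ g).mp hg
        have hgc : g = l * homogeneousComponent e h' := by
          have hc1 : homogeneousComponent (e + 1) g = g := by
            rw [homogeneousComponent_of_mem hg, if_pos rfl]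
          have hc2 : homogeneousComponent (1 + e) (l * h') =
              l * homogeneousComponent e h' := aux_hc_mul l h' hlhom e
          rw [show e + 1 = 1 + e from by omega] at hc1
          rw [← hc1, hh', hc2]
        refine ⟨homogeneousComponent e h', homogeneousComponent_mem e h', ?_⟩
        simp only [LinearMap.mulLeft_apply]
        rw [← hge, hgc]
        ring
      haveI : FiniteDimensional k
          (Submodule.map (LinearMap.mulLeft k (l * c)) (hs e)) := by
        have hfd : FiniteDimensional k (hs e) := aux_fd_hs 3 e
        exact Module.Finite.map (hs e) (LinearMap.mulLeft k (l * c))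
      have hInfrank : Module.finrank k (A (e + 3) ⊓ B (e + 1) :
          Submodule k (MvPolynomial (Fin 3) k)) ≤ (e + 2).choose 2 := by
        refine le_trans (Submodule.finrank_mono hInf) ?_
        refine le_trans (Submodule.finrank_map_le _ _) ?_
        rw [hSd e]
      have hsupinf := Submodule.finrank_sup_add_finrank_inf_eq (A (e + 3)) (B (e + 1))
      have hWrank : Module.finrank k (pIdealGrade J (e + 4)) ≤
          Module.finrank k (A (e + 3) ⊔ B (e + 1) :
            Submodule k (MvPolynomial (Fin 3) k)) := by
        have hJr := (hJrank (e + 4) (by omega)).1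
        have hJr2 := (hJrank (e + 4) (by omega)).2
        have hAr := hA_rank (e + 3)
        have hBr := hB_rank (e + 1)
        have q1 := c1 e
        have q2 := c1 (e + 1)
        have q3 := c1 (e + 2)
        have q4 := c1 (e + 3)
        rw [show e + 1 + 2 = e + 3 from by omega] at hBr q2
        rw [show e + 2 + 2 = e + 4 from by omega] at q3
        rw [show e + 3 + 2 = e + 5 from by omega] at hAr q4
        rw [show e + 1 + 3 = e + 4 from by omega] at q2
        rw [show e + 2 + 3 = e + 5 from by omega] at q3
        rw [show e + 3 + 3 = e + 6 from by omega] at q4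
        rw [show e + 4 + 2 = e + 6 from by omega] at hJr hJr2
        omega
      have heqW : A (e + 3) ⊔ B (e + 1) = pIdealGrade J (e + 4) :=
        Submodule.eq_of_le_of_finrank_le hWle hWrank
      rw [← heqW]
      refine sup_le (hAK (e + 3)) (hBK (e + 1))
  -- conclude
  refine ⟨l, hl1, c, hc3, hcnotl, ?_⟩
  rw [← K_def]
  refine le_antisymm ?_ hKJ
  intro x hx
  rw [← sum_homogeneousComponent x]
  refine Ideal.sum_mem K ?_
  intro i _
  exact key i ⟨aux_comp_mem hhom hx i, homogeneousComponent_mem i x⟩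
end

section
/- Let J ⊆ S = k[x,y,z] be a proper saturated homogeneous ideal such that dim_k(S/J)_d = 3 for all sufficiently large d. Then the Hilbert function of S/J is either (1,3,3,3,…) or (1,2,3,3,3,…); that is, dim_k(S/J)_d = 3 for all d ≥ 2 and dim_k(S/J)_1 ∈ {2, 3}. -/
set_option synthInstance.maxHeartbeats 1000000
set_option maxHeartbeats 1000000

open Submodule


open Submodule

theorem myAss_subset {R M : Type*} [CommRing R] [AddCommGroup M] [Module R M]
    (N : Submodule R M) :
    associatedPrimes R M ⊆ associatedPrimes R N ∪ associatedPrimes R (M ⧸ N) := by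
  exact associatedPrimes.subset_union_of_exact N.injective_subtype (LinearMap.exact_subtype_mkQ N)

theorem myAss_finite {R M : Type*} [CommRing R] [AddCommGroup M] [Module R M]
    [IsNoetherianRing R] [Module.Finite R M] : (associatedPrimes R M).Finite := by
  exact associatedPrimes.finite (A := R) (M := M)

open MvPolynomial Submodule

noncomputable section
variable {k : Type} [Field k]

/-- the moment-curve linear form -/
def ellt (k : Type) [Field k] (t : k) : MvPolynomial (Fin 3) k :=
  X 0 + C t * X 1 + C (t^2) * X 2

lemma ellt_homog (t : k) : (ellt k t).IsHomogeneous 1 := by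
  unfold ellt
  exact ((isHomogeneous_X k 0).add (isHomogeneous_C_mul_X t 1)).add
    (isHomogeneous_C_mul_X (t^2) 2)

lemma mem_of_ellt_mem (p : Ideal (MvPolynomial (Fin 3) k)) {t1 t2 t3 : k}
    (h12 : t1 ≠ t2) (h13 : t1 ≠ t3) (h23 : t2 ≠ t3)
    (hp1 : ellt k t1 ∈ p) (hp2 : ellt k t2 ∈ p) (hp3 : ellt k t3 ∈ p) :
    ∀ i : Fin 3, (X i : MvPolynomial (Fin 3) k) ∈ p := by
  have unitcancel : ∀ (c : k) (u : MvPolynomial (Fin 3) k), c ≠ 0 → C c * u ∈ p → u ∈ p := by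
    intro c u hc hmem
    have := Ideal.mul_mem_left p (C c⁻¹) hmem
    rwa [← mul_assoc, ← C_mul, inv_mul_cancel₀ hc, C_1, one_mul] at this
  have key : ∀ s1 s2 : k, s1 ≠ s2 → ellt k s1 ∈ p → ellt k s2 ∈ p →
      (X 1 + C (s1 + s2) * X 2 : MvPolynomial (Fin 3) k) ∈ p := by
    intro s1 s2 hne hm1 hm2
    apply unitcancel (s1 - s2) _ (sub_ne_zero.mpr hne)
    have heq : C (s1 - s2) * (X 1 + C (s1 + s2) * X 2 : MvPolynomial (Fin 3) k)
        = ellt k s1 - ellt k s2 := by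
      unfold ellt
      simp only [C_sub, C_add, C_mul, C_pow]
      ring
    rw [heq]
    exact sub_mem hm1 hm2
  have u12 := key t1 t2 h12 hp1 hp2
  have u13 := key t1 t3 h13 hp1 hp3
  have hX2 : (X 2 : MvPolynomial (Fin 3) k) ∈ p := by
    apply unitcancel (t2 - t3) _ (sub_ne_zero.mpr h23)
    have heq : (C (t2 - t3) : MvPolynomial (Fin 3) k) * X 2
        = (X 1 + C (t1 + t2) * X 2) - (X 1 + C (t1 + t3) * X 2) := by
      simp only [C_sub, C_add, C_mul, C_pow]
      ring
    rw [heq]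
    exact sub_mem u12 u13
  have hX1 : (X 1 : MvPolynomial (Fin 3) k) ∈ p := by
    have := sub_mem u12 (Ideal.mul_mem_left p (C (t1 + t2)) hX2)
    simpa using this
  have hX0 : (X 0 : MvPolynomial (Fin 3) k) ∈ p := by
    have := sub_mem hp1 (add_mem (Ideal.mul_mem_left p (C t1) hX1)
      (Ideal.mul_mem_left p (C (t1^2)) hX2))
    unfold ellt at this
    simpa using this
  intro i
  fin_cases i <;> assumption

lemma exists_regular [Infinite k] (J : Ideal (MvPolynomial (Fin 3) k))
    (hsat : IsSatIdeal J) :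
    ∃ ℓ : MvPolynomial (Fin 3) k, ℓ.IsHomogeneous 1 ∧
      ∀ f : MvPolynomial (Fin 3) k, ℓ * f ∈ J → f ∈ J := by
  by_contra hcon
  push_neg at hcon
  have hbad : ∀ t : k, ∃ f : MvPolynomial (Fin 3) k, ellt k t * f ∈ J ∧ f ∉ J := by
    intro t
    exact hcon (ellt k t) (ellt_homog t)
  -- each ellt t is a zerodivisor on S/J
  have hzd : ∀ t : k, ellt k t ∈
      {r : MvPolynomial (Fin 3) k | ∃ x : MvPolynomial (Fin 3) k ⧸ J, x ≠ 0 ∧ r • x = 0} := by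
    intro t
    obtain ⟨f, hf1, hf2⟩ := hbad t
    refine ⟨Ideal.Quotient.mk J f, ?_, ?_⟩
    · intro h0
      exact hf2 ((Ideal.Quotient.eq_zero_iff_mem).mp h0)
    · show ellt k t • (Ideal.Quotient.mk J f) = 0
      have : ellt k t • (Ideal.Quotient.mk J f) = Ideal.Quotient.mk J (ellt k t * f) := rfl
      rw [this, Ideal.Quotient.eq_zero_iff_mem]
      exact hf1
  have hAfin : (associatedPrimes (MvPolynomial (Fin 3) k) (MvPolynomial (Fin 3) k ⧸ J)).Finite := myAss_finite
  rw [← biUnion_associatedPrimes_eq_zero_divisors] at hzd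
  -- some associated prime contains infinitely many ellt
  have hcover : (Set.univ : Set k) ⊆ ⋃ p ∈ associatedPrimes (MvPolynomial (Fin 3) k) (MvPolynomial (Fin 3) k ⧸ J), {t : k | ellt k t ∈ p} := by
    intro t _
    obtain ⟨U, ⟨q, rfl⟩, hq⟩ := hzd t
    simp only [Set.mem_iUnion] at hq ⊢
    obtain ⟨hqA, hmem⟩ := hq
    exact ⟨q, hqA, hmem⟩
  have hexinf : ∃ p ∈ associatedPrimes (MvPolynomial (Fin 3) k) (MvPolynomial (Fin 3) k ⧸ J), {t : k | ellt k t ∈ p}.Infinite := by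
    by_contra hall
    push_neg at hall
    have : (Set.univ : Set k).Finite :=
      Set.Finite.subset (Set.Finite.biUnion hAfin hall) hcover
    exact Set.infinite_univ this
  obtain ⟨p, hpA, hpinf⟩ := hexinf
  obtain ⟨t1, ht1⟩ := hpinf.nonempty
  obtain ⟨t2, ht2⟩ := (hpinf.diff (Set.finite_singleton t1)).nonempty
  obtain ⟨t3, ht3⟩ := (hpinf.diff ((Set.finite_singleton t1).insert t2)).nonempty
  have h12 : t1 ≠ t2 := fun h => ht2.2 (by simp [h.symm])
  have h13 : t1 ≠ t3 := fun h => ht3.2 (by simp [h.symm])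
  have h23 : t2 ≠ t3 := fun h => ht3.2 (by simp [h.symm])
  have hX := mem_of_ellt_mem p h12 h13 h23 ht1 ht2.1 ht3.1
  -- p = Ann(span {xbar}), extract torsion element
  obtain ⟨hprime, xbar, hxb⟩ := (isAssociatedPrime_iff).mp hpA
  replace hxb : p = (span (MvPolynomial (Fin 3) k) {xbar}).annihilator := by
    rw [hxb]; ext r; rw [mem_colon_singleton, mem_annihilator_span_singleton, mem_bot]
  have hxb0 : xbar ≠ 0 := by
    rintro rfl
    apply hprime.ne_top
    rw [hxb, Submodule.annihilator_eq_top_iff]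
    simp
  obtain ⟨g, rfl⟩ := Ideal.Quotient.mk_surjective (I := J) xbar
  have hgJ : g ∉ J := by
    intro h
    exact hxb0 (Ideal.Quotient.eq_zero_iff_mem.mpr h)
  have hXg : ∀ i : Fin 3, (X i : MvPolynomial (Fin 3) k) * g ∈ J := by
    intro i
    have hann : (X i : MvPolynomial (Fin 3) k) ∈
        (span (MvPolynomial (Fin 3) k)
          {(Ideal.Quotient.mk J g : MvPolynomial (Fin 3) k ⧸ J)}).annihilator := by
      rw [← hxb]; exact hX i
    rw [mem_annihilator_span_singleton] at hann
    have h2 : (X i : MvPolynomial (Fin 3) k) • (Ideal.Quotient.mk J g : MvPolynomial (Fin 3) k ⧸ J)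
        = Ideal.Quotient.mk J ((X i : MvPolynomial (Fin 3) k) * g) := rfl
    rw [h2] at hann
    exact Ideal.Quotient.eq_zero_iff_mem.mp hann
  have hcolon : g ∈ Submodule.colon
      (J : Submodule (MvPolynomial (Fin 3) k) (MvPolynomial (Fin 3) k)) (irrIdeal k 3) := by
    rw [Submodule.mem_colon]
    intro u hu
    show g • u ∈ J
    unfold irrIdeal at hu
    induction hu using Submodule.span_induction with
    | mem v hv =>
      obtain ⟨i, rfl⟩ := hv
      show g * X i ∈ J
      rw [mul_comm]; exact hXg i
    | zero => show g * 0 ∈ J; rw [mul_zero]; exact zero_mem _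
    | add a b _ _ ha hb =>
      show g * (a + b) ∈ J
      rw [mul_add]; exact add_mem ha hb
    | smul a u hu hmem =>
      show g * (a • u) ∈ J
      rw [smul_eq_mul, mul_comm a u, ← mul_assoc]
      exact Ideal.mul_mem_right _ _ hmem
  rw [hsat] at hcolon
  exact hgJ hcolon
end


noncomputable section
variable {k : Type} [Field k]

instance instFDSD (n d : ℕ) : FiniteDimensional k (MvPolynomial.homogeneousSubmodule (Fin n) k d) :=
  Submodule.finiteDimensional_of_le (S₂ := MvPolynomial.restrictTotalDegree (Fin n) k d)
    (fun p hp => by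
      rw [MvPolynomial.mem_restrictTotalDegree]
      exact ((MvPolynomial.mem_homogeneousSubmodule _ _).1 hp).totalDegree_le)

def JDc (J : Ideal (MvPolynomial (Fin 3) k)) (d : ℕ) :
    Submodule k (MvPolynomial.homogeneousSubmodule (Fin 3) k d) :=
  (pIdealGrade J d).comap (MvPolynomial.homogeneousSubmodule (Fin 3) k d).subtype

lemma pIdealGrade_le (J : Ideal (MvPolynomial (Fin 3) k)) (d : ℕ) :
    pIdealGrade J d ≤ MvPolynomial.homogeneousSubmodule (Fin 3) k d := inf_le_right

lemma mem_JDc {J : Ideal (MvPolynomial (Fin 3) k)} {d : ℕ}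
    (v : MvPolynomial.homogeneousSubmodule (Fin 3) k d) :
    v ∈ JDc J d ↔ (v : MvPolynomial (Fin 3) k) ∈ J := by
  simp only [JDc, Submodule.mem_comap, Submodule.subtype_apply, pIdealGrade,
    Submodule.mem_inf, Submodule.restrictScalars_mem]
  exact ⟨fun h => h.1, fun h => ⟨h, v.2⟩⟩

lemma hilb_eq (J : Ideal (MvPolynomial (Fin 3) k)) (d : ℕ) :
    hilb J d = Module.finrank k
      ((MvPolynomial.homogeneousSubmodule (Fin 3) k d) ⧸ JDc J d) := by
  have h1 : Module.finrank k (JDc J d) = Module.finrank k (pIdealGrade J d) :=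
    (Submodule.comapSubtypeEquivOfLe (pIdealGrade_le J d)).finrank_eq
  have h2 := Submodule.finrank_quotient_add_finrank (JDc J d)
  unfold hilb
  omega

def psi {ℓ : MvPolynomial (Fin 3) k} (hl : ℓ.IsHomogeneous 1) (d : ℕ) :
    (MvPolynomial.homogeneousSubmodule (Fin 3) k d) →ₗ[k]
      (MvPolynomial.homogeneousSubmodule (Fin 3) k (d+1)) :=
  LinearMap.codRestrict (MvPolynomial.homogeneousSubmodule (Fin 3) k (d+1))
    ((LinearMap.mulLeft k ℓ).comp (MvPolynomial.homogeneousSubmodule (Fin 3) k d).subtype)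
    (fun v => by
      rw [MvPolynomial.mem_homogeneousSubmodule]
      have := hl.mul ((MvPolynomial.mem_homogeneousSubmodule _ _).1 v.2)
      rwa [show 1 + d = d + 1 by omega] at this)

lemma psi_apply {ℓ : MvPolynomial (Fin 3) k} (hl : ℓ.IsHomogeneous 1) (d : ℕ)
    (v : MvPolynomial.homogeneousSubmodule (Fin 3) k d) :
    ((psi hl d v : MvPolynomial.homogeneousSubmodule (Fin 3) k (d+1)) :
      MvPolynomial (Fin 3) k) = ℓ * v := rfl

def mulQ (J : Ideal (MvPolynomial (Fin 3) k)) {ℓ : MvPolynomial (Fin 3) k}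
    (hl : ℓ.IsHomogeneous 1) (d : ℕ) :
    ((MvPolynomial.homogeneousSubmodule (Fin 3) k d) ⧸ JDc J d) →ₗ[k]
      ((MvPolynomial.homogeneousSubmodule (Fin 3) k (d+1)) ⧸ JDc J (d+1)) :=
  Submodule.liftQ (JDc J d) ((JDc J (d+1)).mkQ.comp (psi hl d))
    (fun v hv => by
      rw [LinearMap.mem_ker, LinearMap.comp_apply, Submodule.mkQ_apply,
        Submodule.Quotient.mk_eq_zero, mem_JDc, psi_apply]
      exact Ideal.mul_mem_left J ℓ ((mem_JDc v).1 hv))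

lemma mulQ_mk (J : Ideal (MvPolynomial (Fin 3) k)) {ℓ : MvPolynomial (Fin 3) k}
    (hl : ℓ.IsHomogeneous 1) (d : ℕ) (v : MvPolynomial.homogeneousSubmodule (Fin 3) k d) :
    mulQ J hl d (Submodule.Quotient.mk v) = Submodule.Quotient.mk (psi hl d v) := rfl

lemma mulQ_injective (J : Ideal (MvPolynomial (Fin 3) k)) {ℓ : MvPolynomial (Fin 3) k}
    (hl : ℓ.IsHomogeneous 1) (d : ℕ)
    (hreg : ∀ f : MvPolynomial (Fin 3) k, ℓ * f ∈ J → f ∈ J) :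
    Function.Injective (mulQ J hl d) := by
  rw [← LinearMap.ker_eq_bot]
  apply LinearMap.ker_eq_bot'.mpr
  intro q hq
  obtain ⟨v, rfl⟩ := Submodule.Quotient.mk_surjective _ q
  rw [mulQ_mk, Submodule.Quotient.mk_eq_zero, mem_JDc] at hq
  rw [Submodule.Quotient.mk_eq_zero, mem_JDc]
  exact hreg _ (by rwa [psi_apply] at hq)

lemma hilb_mono_step (J : Ideal (MvPolynomial (Fin 3) k)) {ℓ : MvPolynomial (Fin 3) k}
    (hl : ℓ.IsHomogeneous 1) (d : ℕ)
    (hreg : ∀ f : MvPolynomial (Fin 3) k, ℓ * f ∈ J → f ∈ J) :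
    hilb J d ≤ hilb J (d+1) := by
  rw [hilb_eq, hilb_eq]
  exact LinearMap.finrank_le_finrank_of_injective (mulQ_injective J hl d hreg)

/-- surjectivity property of multiplication by ℓ in degree e -/
def SurjP (J : Ideal (MvPolynomial (Fin 3) k)) (ℓ : MvPolynomial (Fin 3) k) (e : ℕ) : Prop :=
  ∀ g ∈ MvPolynomial.homogeneousSubmodule (Fin 3) k (e+1),
    ∃ f ∈ MvPolynomial.homogeneousSubmodule (Fin 3) k e, g - ℓ * f ∈ J

lemma surjP_of_surjective (J : Ideal (MvPolynomial (Fin 3) k)) {ℓ : MvPolynomial (Fin 3) k}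
    (hl : ℓ.IsHomogeneous 1) (d : ℕ)
    (hs : Function.Surjective (mulQ J hl d)) : SurjP J ℓ d := by
  intro g hg
  obtain ⟨q, hq⟩ := hs (Submodule.Quotient.mk ⟨g, hg⟩)
  obtain ⟨v, rfl⟩ := Submodule.Quotient.mk_surjective _ q
  rw [mulQ_mk, Submodule.Quotient.eq] at hq
  rw [mem_JDc] at hq
  refine ⟨v, v.2, ?_⟩
  have hval : ((psi hl d v - ⟨g, hg⟩ :
      MvPolynomial.homogeneousSubmodule (Fin 3) k (d+1)) : MvPolynomial (Fin 3) k)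
      = ℓ * v - g := by
    rw [Submodule.coe_sub, psi_apply]
  rw [hval] at hq
  have := neg_mem hq
  rwa [neg_sub] at this

lemma surjective_of_surjP (J : Ideal (MvPolynomial (Fin 3) k)) {ℓ : MvPolynomial (Fin 3) k}
    (hl : ℓ.IsHomogeneous 1) (d : ℕ)
    (hs : SurjP J ℓ d) : Function.Surjective (mulQ J hl d) := by
  intro q
  obtain ⟨w, rfl⟩ := Submodule.Quotient.mk_surjective _ q
  obtain ⟨f, hf, hJ⟩ := hs w w.2
  refine ⟨Submodule.Quotient.mk ⟨f, hf⟩, ?_⟩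
  rw [mulQ_mk, Submodule.Quotient.eq, mem_JDc]
  have hval : ((psi hl d ⟨f, hf⟩ - w :
      MvPolynomial.homogeneousSubmodule (Fin 3) k (d+1)) : MvPolynomial (Fin 3) k)
      = ℓ * f - (w : MvPolynomial (Fin 3) k) := by
    rw [Submodule.coe_sub, psi_apply]
  rw [hval]
  have := neg_mem hJ
  rwa [neg_sub] at this

lemma surjP_of_eq (J : Ideal (MvPolynomial (Fin 3) k)) {ℓ : MvPolynomial (Fin 3) k}
    (hl : ℓ.IsHomogeneous 1) (d : ℕ) (heq : hilb J d = hilb J (d+1))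
    (hreg : ∀ f : MvPolynomial (Fin 3) k, ℓ * f ∈ J → f ∈ J) : SurjP J ℓ d := by
  apply surjP_of_surjective J hl d
  have hfr : Module.finrank k ((MvPolynomial.homogeneousSubmodule (Fin 3) k d) ⧸ JDc J d)
      = Module.finrank k ((MvPolynomial.homogeneousSubmodule (Fin 3) k (d+1)) ⧸ JDc J (d+1)) := by
    rw [← hilb_eq, ← hilb_eq]; exact heq
  exact (LinearMap.injective_iff_surjective_of_finrank_eq_finrank hfr).mp
    (mulQ_injective J hl d hreg)

lemma hilb_le_of_surjP (J : Ideal (MvPolynomial (Fin 3) k)) {ℓ : MvPolynomial (Fin 3) k}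
    (hl : ℓ.IsHomogeneous 1) (d : ℕ) (hs : SurjP J ℓ d) : hilb J (d+1) ≤ hilb J d := by
  have hsurj := surjective_of_surjP J hl d hs
  rw [hilb_eq, hilb_eq]
  have h1 : LinearMap.range (mulQ J hl d) = ⊤ := LinearMap.range_eq_top.mpr hsurj
  calc Module.finrank k ((MvPolynomial.homogeneousSubmodule (Fin 3) k (d+1)) ⧸ JDc J (d+1))
      = Module.finrank k (LinearMap.range (mulQ J hl d)) := by rw [h1, finrank_top]
    _ ≤ Module.finrank k ((MvPolynomial.homogeneousSubmodule (Fin 3) k d) ⧸ JDc J d) :=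
        LinearMap.finrank_range_le _

lemma surjP_succ (J : Ideal (MvPolynomial (Fin 3) k)) (ℓ : MvPolynomial (Fin 3) k)
    (d : ℕ) (hs : SurjP J ℓ d) : SurjP J ℓ (d+1) := by
  classical
  set W : Submodule k (MvPolynomial (Fin 3) k) :=
    { carrier := {g | ∃ f ∈ MvPolynomial.homogeneousSubmodule (Fin 3) k (d+1), g - ℓ * f ∈ J}
      add_mem' := by
        rintro a b ⟨fa, hfa, hJa⟩ ⟨fb, hfb, hJb⟩
        refine ⟨fa + fb, add_mem hfa hfb, ?_⟩
        have heq : a + b - ℓ * (fa + fb) = (a - ℓ * fa) + (b - ℓ * fb) := by ring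
        rw [heq]; exact add_mem hJa hJb
      zero_mem' := ⟨0, zero_mem _, by simp⟩
      smul_mem' := by
        rintro c g ⟨f, hf, hJ⟩
        refine ⟨c • f, Submodule.smul_mem _ c hf, ?_⟩
        have heq : c • g - ℓ * (c • f) = c • (g - ℓ * f) := by
          rw [mul_smul_comm, smul_sub]
        rw [heq, MvPolynomial.smul_eq_C_mul]
        exact Ideal.mul_mem_left J _ hJ } with hW
  intro g hg
  suffices h : g ∈ W by exact h
  have hdecomp := MvPolynomial.as_sum g
  rw [hdecomp]
  apply Submodule.sum_mem
  intro σ hσ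
  have hghom : g.IsHomogeneous (d+1+1) := (MvPolynomial.mem_homogeneousSubmodule _ _).1 hg
  have hdeg : σ.degree = d + 2 := by
    by_contra hne
    exact (MvPolynomial.mem_support_iff.mp hσ) (hghom.coeff_eq_zero (by omega))
  have hσ0 : σ ≠ 0 := by
    intro h; rw [h] at hdeg; simp [map_zero] at hdeg
  obtain ⟨i, hi⟩ := Finsupp.ne_iff.mp hσ0
  simp only [Finsupp.coe_zero, Pi.zero_apply] at hi
  set τ : Fin 3 →₀ ℕ := σ - Finsupp.single i 1 with hτ
  have hστ : σ = τ + Finsupp.single i 1 := by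
    ext j
    rcases eq_or_ne i j with rfl | hij
    · have h1 : σ i ≥ 1 := by omega
      simp only [hτ, Finsupp.add_apply, Finsupp.tsub_apply, Finsupp.single_eq_same]
      omega
    · simp only [hτ, Finsupp.add_apply, Finsupp.tsub_apply,
        Finsupp.single_apply, if_neg hij]
      omega
  have hτdeg : τ.degree = d + 1 := by
    have hadd : σ.degree = τ.degree + (Finsupp.single i 1).degree := by
      rw [hστ]
      simp [Finsupp.degree_eq_weight_one, map_add]
    have hsing : (Finsupp.single i 1).degree = 1 := by
      exact Finsupp.degree_single i 1
    omega
  have hmono : (monomial σ) (coeff σ g) = X i * (monomial τ) (coeff σ g) := by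
    rw [hστ, X, monomial_mul, one_mul, add_comm]
  have hτmem : (monomial τ) (coeff σ g) ∈ MvPolynomial.homogeneousSubmodule (Fin 3) k (d+1) := by
    rw [MvPolynomial.mem_homogeneousSubmodule]
    exact MvPolynomial.isHomogeneous_monomial _ hτdeg
  obtain ⟨f, hf, hJ⟩ := hs _ hτmem
  refine ⟨X i * f, ?_, ?_⟩
  · rw [MvPolynomial.mem_homogeneousSubmodule]
    have hhm := (MvPolynomial.isHomogeneous_X k i).mul
      ((MvPolynomial.mem_homogeneousSubmodule _ _).1 hf)
    rwa [show 1 + d = d + 1 by omega] at hhm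
  · have heq2 : (monomial σ) (coeff σ g) - ℓ * (X i * f)
        = X i * ((monomial τ) (coeff σ g) - ℓ * f) := by
      rw [hmono]; ring
    rw [heq2]
    exact Ideal.mul_mem_left J _ hJ

end


noncomputable section
variable {k : Type} [Field k]
lemma homog0_eq_C {f : MvPolynomial (Fin 3) k} (h : f.IsHomogeneous 0) :
    f = C (coeff 0 f) := by
  apply MvPolynomial.ext
  intro m
  rw [MvPolynomial.coeff_C]
  rcases eq_or_ne m 0 with rfl | hm
  · simp
  · rw [if_neg (by exact fun hh => hm hh.symm)]
    apply h.coeff_eq_zero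
    rw [Ne, Finsupp.degree_eq_zero_iff]
    exact hm

lemma SD0_eq : MvPolynomial.homogeneousSubmodule (Fin 3) k 0
    = Submodule.span k {(1 : MvPolynomial (Fin 3) k)} := by
  apply le_antisymm
  · intro f hf
    rw [MvPolynomial.mem_homogeneousSubmodule] at hf
    rw [Submodule.mem_span_singleton]
    refine ⟨coeff 0 f, ?_⟩
    rw [MvPolynomial.smul_eq_C_mul, mul_one]
    exact (homog0_eq_C hf).symm
  · rw [Submodule.span_le, Set.singleton_subset_iff]
    exact MvPolynomial.isHomogeneous_one _ _

lemma hilb_zero (J : Ideal (MvPolynomial (Fin 3) k)) (hproper : J ≠ ⊤) :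
    hilb J 0 = 1 := by
  have h1 : Module.finrank k (MvPolynomial.homogeneousSubmodule (Fin 3) k 0) = 1 := by
    rw [SD0_eq]
    exact finrank_span_singleton one_ne_zero
  have h2 : pIdealGrade J 0 = (⊥ : Submodule k (MvPolynomial (Fin 3) k)) := by
    apply le_antisymm
    · intro f hf
      rw [pIdealGrade, Submodule.mem_inf] at hf
      obtain ⟨hfJ, hfh⟩ := hf
      rw [Submodule.restrictScalars_mem] at hfJ
      rw [MvPolynomial.mem_homogeneousSubmodule] at hfh
      have hfC := homog0_eq_C hfh
      rcases eq_or_ne (coeff 0 f) 0 with hc | hc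
      · rw [Submodule.mem_bot, hfC, hc, map_zero]
      · exfalso
        apply hproper
        apply Ideal.eq_top_of_isUnit_mem J (hfC ▸ hfJ)
        exact IsUnit.map _ (isUnit_iff_ne_zero.mpr hc)
    · exact bot_le
  unfold hilb
  rw [h1, h2, finrank_bot]
end


open MvPolynomial in
/-- A proper saturated homogeneous ideal `J ⊆ S = k[x,y,z]` with
`dim_k (S/J)_d = 3` for all large `d` has Hilbert function `(1,3,3,3,…)` or
`(1,2,3,3,3,…)`: `dim_k (S/J)_0 = 1`, `dim_k (S/J)_d = 3` for `d ≥ 2`, and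
`dim_k (S/J)_1 ∈ {2, 3}`. -/
theorem stmt_14 (k : Type) [Field k] [IsAlgClosed k] (hchar : ringChar k ≠ 2)
    (J : Ideal (MvPolynomial (Fin 3) k)) (hproper : J ≠ ⊤)
    (hhom : IsHomogPolyIdeal J) (hsat : IsSatIdeal J)
    (hbig : ∃ N : ℕ, ∀ d : ℕ, N ≤ d → hilb J d = 3) :
    hilb J 0 = 1 ∧ (∀ d : ℕ, 2 ≤ d → hilb J d = 3) ∧
      (hilb J 1 = 2 ∨ hilb J 1 = 3) := by
  obtain ⟨N, hN⟩ := hbig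
  obtain ⟨ℓ, hℓ, hreg⟩ := exists_regular J hsat
  have mono1 : ∀ d, hilb J d ≤ hilb J (d+1) := fun d => hilb_mono_step J hℓ d hreg
  have mono : Monotone (hilb J) := monotone_nat_of_le_succ mono1
  have h0 := hilb_zero J hproper
  have bound : ∀ d, hilb J d ≤ 3 := by
    intro d
    calc hilb J d ≤ hilb J (max N d) := mono (le_max_right _ _)
      _ = 3 := hN _ (le_max_left _ _)
  have stab : ∀ d, hilb J d = hilb J (d+1) → ∀ e, d ≤ e → hilb J e = hilb J d := by
    intro d heq
    have hS : ∀ m, SurjP J ℓ (d + m) := by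
      intro m
      induction m with
      | zero => exact surjP_of_eq J hℓ d heq hreg
      | succ m ih => exact surjP_succ J ℓ (d+m) ih
    have hconst : ∀ m, hilb J (d + m) = hilb J d := by
      intro m
      induction m with
      | zero => rfl
      | succ m ih =>
        have hle := hilb_le_of_surjP J hℓ (d+m) (hS m)
        have hge := mono1 (d+m)
        show hilb J ((d+m)+1) = hilb J d
        omega
    intro e he
    have hh := hconst (e - d)
    rwa [show d + (e - d) = e by omega] at hh
  have hnotall : ∀ d, hilb J d = hilb J (d+1) → hilb J d = 3 := by
    intro d heq
    have hh := stab d heq (max N d) (le_max_right _ _)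
    rw [hN _ (le_max_left _ _)] at hh
    omega
  have h1ge : 2 ≤ hilb J 1 := by
    rcases Nat.lt_or_ge (hilb J 1) 2 with h | h
    · have h01 : hilb J 0 ≤ hilb J 1 := mono1 0
      have heq01 : hilb J 0 = hilb J 1 := by omega
      have h3 := hnotall 0 heq01
      omega
    · exact h
  have h2eq : hilb J 2 = 3 := by
    rcases eq_or_ne (hilb J 1) (hilb J 2) with h | h
    · have h3 := hnotall 1 h
      omega
    · have hm : hilb J 1 ≤ hilb J 2 := mono1 1
      have hb := bound 2
      omega
  refine ⟨h0, ?_, ?_⟩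
  · intro d hd
    have hle := bound d
    have hge : hilb J 2 ≤ hilb J d := mono hd
    omega
  · have hb := bound 1
    omega
end
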